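/- arXiv:math/0302327 — 5 statements merged into one kernel-verified Lean document; each statement's English description precedes it below -/
import Mathlib

section
/- Let p ≥ 2 and H > 0. Then for all η ≥ 0 with 1 + ((p-1)/(pH))η > 0, the inequality (1 + ((p-1)/(pH))η)^{p/(p-1)} ≤ 1 + (1/H)η + (1/(2pH^2))η^2 holds. -/
/-!
With `α = p / (p - 1) ∈ [1, 2]` and `x = ((p - 1) / (p H)) η ≥ 0`, the claim is the second-order
Taylor bound `(1 + x) ^ α ≤ 1 + α x + α (α - 1) / 2 x ^ 2`, whose remainder carries the factor
`α (α - 1) (α - 2) ≤ 0`. It is proved by showing that the difference of the two sides vanishes at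
`0` and has derivative `α (1 + (α - 1) x - (1 + x) ^ (α - 1))`, which is nonnegative by
Bernoulli's inequality for the exponent `α - 1 ∈ [0, 1]`.
-/

open Real Set

section OneAddRpow

variable {α : ℝ}

lemma hasDerivAt_taylor2_sub_one_add_rpow {t : ℝ} (ht : -1 < t) :
    HasDerivAt (fun s => 1 + α * s + α * (α - 1) / 2 * s ^ 2 - (1 + s) ^ α)
      (α * (1 + (α - 1) * t - (1 + t) ^ (α - 1))) t := by
  have hrpow := ((hasDerivAt_id t).const_add 1).rpow_const (p := α) (Or.inl (by simp; linarith))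
  have hpoly := (((hasDerivAt_id t).const_mul α).const_add 1).add
    ((hasDerivAt_pow 2 t).const_mul (α * (α - 1) / 2))
  exact (hpoly.sub hrpow).congr_deriv (by norm_num; ring)

lemma one_add_rpow_le_taylor2 (h1 : 1 ≤ α) (h2 : α ≤ 2) {x : ℝ} (hx : 0 ≤ x) :
    (1 + x) ^ α ≤ 1 + α * x + α * (α - 1) / 2 * x ^ 2 := by
  have hderiv : ∀ t ∈ Ici (0 : ℝ), HasDerivAt
      (fun s => 1 + α * s + α * (α - 1) / 2 * s ^ 2 - (1 + s) ^ α)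
      (α * (1 + (α - 1) * t - (1 + t) ^ (α - 1))) t :=
    fun t ht => hasDerivAt_taylor2_sub_one_add_rpow (by linarith [mem_Ici.mp ht])
  have hmono := monotoneOn_of_hasDerivWithinAt_nonneg (convex_Ici 0)
    (continuousOn_of_forall_continuousAt fun t ht => (hderiv t ht).continuousAt)
    (fun t ht => (hderiv t (interior_subset ht)).hasDerivWithinAt)
    (fun t ht => by
      have ht0 : 0 ≤ t := interior_subset (s := Ici (0 : ℝ)) ht
      have hbernoulli : (1 + t) ^ (α - 1) ≤ 1 + (α - 1) * t :=
        rpow_one_add_le_one_add_mul_self (by linarith) (by linarith) (by linarith)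
      exact mul_nonneg (by linarith) (by linarith))
  have hdiff := hmono self_mem_Ici (mem_Ici.mpr hx) hx
  norm_num at hdiff
  linarith

end OneAddRpow

theorem taylor_bound_g (p H : ℝ) (hp : 2 ≤ p) (hH : 0 < H) :
    ∀ η : ℝ, 0 ≤ η → 0 < 1 + ((p - 1) / (p * H)) * η →
      (1 + ((p - 1) / (p * H)) * η) ^ (p / (p - 1)) ≤
        1 + (1 / H) * η + (1 / (2 * p * H ^ 2)) * η ^ 2 := by
  intro η hη _
  have hp1 : 0 < p - 1 := by linarith
  have h1 : 1 ≤ p / (p - 1) := by rw [le_div_iff₀ hp1]; linarith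
  have h2 : p / (p - 1) ≤ 2 := by rw [div_le_iff₀ hp1]; linarith
  have hx : 0 ≤ (p - 1) / (p * H) * η := by positivity
  convert one_add_rpow_le_taylor2 h1 h2 hx using 2
  · field_simp
  · field_simp
    ring
end

section
/- Let p ≥ 2 and H > 0. For all η ≥ 0, setting f(η) = (p-1) + ((p-1)/H)η + ((p-1)/(2pH^2))η^2 and g(η) = (1 + ((p-1)/(pH))η)^{p/(p-1)}, we have f(η) - (p-1)g(η) ≥ 0. -/
/-!
With `q = p / (p - 1) ∈ (1, 2]` and `x = (p - 1) η / (p H) ≥ 0`, the quantity `f(η)` is exactly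
`(p - 1)` times the second-order Taylor polynomial `1 + q x + q (q - 1) x² / 2` of `(1 + x) ^ q`
at `0`. For `q ≤ 2` this polynomial dominates `(1 + x) ^ q` on `x ≥ 0`: the derivative of the
gap is `q ((1 + (q - 1) x) - (1 + x) ^ (q - 1))`, nonnegative by Bernoulli's inequality for the
exponent `q - 1 ∈ [0, 1]`.
-/

open Set

lemma hasDerivAt_quadratic_sub_one_add_rpow (q : ℝ) {t : ℝ} (ht : -1 < t) :
    HasDerivAt (fun t => 1 + q * t + q * (q - 1) / 2 * t ^ 2 - (1 + t) ^ q)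
      (q * ((1 + (q - 1) * t) - (1 + t) ^ (q - 1))) t := by
  have hrpow : HasDerivAt (fun t : ℝ => (1 + t) ^ q) (q * (1 + t) ^ (q - 1)) t := by
    simpa using ((hasDerivAt_id t).const_add 1).rpow_const (p := q) (Or.inl (by simp; linarith))
  exact ((((hasDerivAt_id t).const_mul q).const_add 1).add
    ((hasDerivAt_pow 2 t).const_mul (q * (q - 1) / 2))).sub hrpow |>.congr_deriv (by simp; ring)

lemma one_add_rpow_le_quadratic {q : ℝ} (hq₁ : 1 ≤ q) (hq₂ : q ≤ 2) {x : ℝ} (hx : 0 ≤ x) :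
    (1 + x) ^ q ≤ 1 + q * x + q * (q - 1) / 2 * x ^ 2 := by
  have hderiv (t : ℝ) (ht : 0 ≤ t) := hasDerivAt_quadratic_sub_one_add_rpow q (by linarith : -1 < t)
  have hmono : MonotoneOn (fun t => 1 + q * t + q * (q - 1) / 2 * t ^ 2 - (1 + t) ^ q) (Ici 0) := by
    refine monotoneOn_of_hasDerivWithinAt_nonneg (convex_Ici 0)
      (f' := fun t => q * ((1 + (q - 1) * t) - (1 + t) ^ (q - 1)))
      (fun t ht => (hderiv t ht).continuousAt.continuousWithinAt) ?_ ?_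
    · rw [interior_Ici]
      exact fun t ht => (hderiv t (le_of_lt ht)).hasDerivWithinAt
    · rw [interior_Ici]
      intro t ht
      have hbernoulli := rpow_one_add_le_one_add_mul_self (s := t) (by linarith [mem_Ioi.mp ht])
        (sub_nonneg.mpr hq₁) (by linarith : q - 1 ≤ 1)
      exact mul_nonneg (by linarith) (sub_nonneg.mpr hbernoulli)
  simpa using hmono self_mem_Ici (mem_Ici.mpr hx) hx

theorem f_minus_g_nonneg (p H : ℝ) (hp : 2 ≤ p) (hH : 0 < H) (η : ℝ) (hη : 0 ≤ η) :
    ((p - 1) + ((p - 1) / H) * η + ((p - 1) / (2 * p * H ^ 2)) * η ^ 2) -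
      (p - 1) * (1 + ((p - 1) / (p * H)) * η) ^ (p / (p - 1)) ≥ 0 := by
  have hp₁ : 0 < p - 1 := by linarith
  have hq₁ : 1 ≤ p / (p - 1) := by rw [le_div_iff₀ hp₁]; linarith
  have hq₂ : p / (p - 1) ≤ 2 := by rw [div_le_iff₀ hp₁]; linarith
  have hx : 0 ≤ (p - 1) / (p * H) * η := by positivity
  have htaylor : (p - 1) + ((p - 1) / H) * η + ((p - 1) / (2 * p * H ^ 2)) * η ^ 2 =
      (p - 1) * (1 + p / (p - 1) * ((p - 1) / (p * H) * η)
        + p / (p - 1) * (p / (p - 1) - 1) / 2 * ((p - 1) / (p * H) * η) ^ 2) := by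
    field_simp
    ring
  rw [htaylor, ge_iff_le, sub_nonneg]
  exact mul_le_mul_of_nonneg_left (one_add_rpow_le_quadratic hq₁ hq₂ hx) hp₁.le
end

section
/- Let Ω ⊂ ℝ^N be open, T a C^1 vector field on Ω, p > 1, and u ∈ C_c^∞(Ω). Then ∫_Ω |∇u|^p dx ≥ ∫_Ω (div T − (p−1)|T|^{p/(p−1)}) |u|^p dx. -/
open Real MeasureTheory

noncomputable def vdiv {N : ℕ} (T : EuclideanSpace ℝ (Fin N) → EuclideanSpace ℝ (Fin N))
    (x : EuclideanSpace ℝ (Fin N)) : ℝ :=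
  ∑ i, inner ℝ (fderiv ℝ T x (EuclideanSpace.single i 1)) (EuclideanSpace.single i (1:ℝ))

section Aux

variable {N : ℕ}

/-- A function continuous on an open set `Ω` and vanishing outside a closed set `K ⊆ Ω`
is continuous. -/
lemma continuous_of_contOn_of_zero {X : Type*} [NormedAddCommGroup X]
    {Ω K : Set (EuclideanSpace ℝ (Fin N))} (hΩ : IsOpen Ω) (hK : IsClosed K) (hKΩ : K ⊆ Ω)
    {f : EuclideanSpace ℝ (Fin N) → X} (hf : ContinuousOn f Ω) (h0 : ∀ x ∉ K, f x = 0) :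
    Continuous f := by
  rw [continuous_iff_continuousAt]
  intro x
  by_cases hx : x ∈ Ω
  · exact hf.continuousAt (hΩ.mem_nhds hx)
  · have hxK : x ∈ Kᶜ := fun h => hx (hKΩ h)
    have : f =ᶠ[nhds x] fun _ => 0 := by
      filter_upwards [hK.isOpen_compl.mem_nhds hxK] with y hy
      exact h0 y hy
    exact ContinuousAt.congr continuousAt_const this.symm

/-- Decomposition of a vector in coordinates for a linear functional. -/
lemma sum_apply_single (L : EuclideanSpace ℝ (Fin N) →L[ℝ] ℝ) (v : EuclideanSpace ℝ (Fin N)) :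
    ∑ i, L (EuclideanSpace.single i 1) * v i = L v := by
  have hv : (∑ i, v i • EuclideanSpace.single i (1:ℝ)) = v := by
    ext j
    rw [WithLp.ofLp_sum, Finset.sum_apply]
    simp [Finset.sum_ite_eq, PiLp.smul_apply, EuclideanSpace.single_apply]
  calc ∑ i, L (EuclideanSpace.single i 1) * v i
      = ∑ i, L (v i • EuclideanSpace.single i (1:ℝ)) := by
        simp [mul_comm]
    _ = L (∑ i, v i • EuclideanSpace.single i (1:ℝ)) := by rw [← map_sum]
    _ = L v := by rw [hv]

end Aux

set_option maxHeartbeats 4000000 in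
theorem vector_field_hardy_ineq {N : ℕ} (Ω : Set (EuclideanSpace ℝ (Fin N)))
    (hΩ : IsOpen Ω) (T : EuclideanSpace ℝ (Fin N) → EuclideanSpace ℝ (Fin N))
    (hT : ContDiffOn ℝ 1 T Ω) (p : ℝ) (hp : 1 < p)
    (u : EuclideanSpace ℝ (Fin N) → ℝ) (hu : ContDiff ℝ (⊤ : ℕ∞) u)
    (hsupp : HasCompactSupport u) (hsupp' : tsupport u ⊆ Ω) :
    ∫ x in Ω, ‖gradient u x‖ ^ p ≥
      ∫ x in Ω, (vdiv T x - (p - 1) * ‖T x‖ ^ (p / (p - 1))) * |u x| ^ p := by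
  classical
  set q : ℝ := p / (p - 1) with hq_def
  have hp0 : (0:ℝ) < p := by linarith
  have hp1 : (0:ℝ) < p - 1 := by linarith
  have hpq : p.HolderConjugate q := Real.HolderConjugate.conjExponent hp
  have hq0 : (0:ℝ) < q := hpq.symm.pos
  set K : Set (EuclideanSpace ℝ (Fin N)) := tsupport u with hK_def
  have hKc : IsCompact K := hsupp
  have hKcl : IsClosed K := isClosed_tsupport u
  -- the function w = |u|^p
  set w : EuclideanSpace ℝ (Fin N) → ℝ := fun x => |u x| ^ p with hw_def
  have hu1 : ContDiff ℝ 1 u := hu.of_le (by simp)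
  have hudiff : Differentiable ℝ u := hu1.differentiable one_ne_zero
  have hw1 : ContDiff ℝ 1 w := by
    have := (hu1.norm_rpow hp)
    simpa [Real.norm_eq_abs] using this
  have hw' : ∀ x, HasFDerivAt w ((p * |u x| ^ (p - 2) * u x) • fderiv ℝ u x) x := fun x =>
    (hasDerivAt_abs_rpow (u x) hp).comp_hasFDerivAt x (hudiff x).hasFDerivAt
  -- vanishing off K
  have hu0 : ∀ x ∉ K, u x = 0 := fun x hx => image_eq_zero_of_notMem_tsupport hx
  have hw0 : ∀ x ∉ K, w x = 0 := by
    intro x hx; simp [hw_def, hu0 x hx, Real.zero_rpow hp0.ne']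
  have huev : ∀ x ∉ K, u =ᶠ[nhds x] fun _ => 0 := by
    intro x hx
    filter_upwards [hKcl.isOpen_compl.mem_nhds hx] with y hy
    exact hu0 y hy
  have hDu0 : ∀ x ∉ K, fderiv ℝ u x = 0 := by
    intro x hx
    rw [(huev x hx).fderiv_eq]
    exact fderiv_const_apply 0
  have hDw0 : ∀ x ∉ K, fderiv ℝ w x = 0 := by
    intro x hx
    rw [(hw' x).fderiv, hu0 x hx]
    simp
  -- continuity facts
  have hTcont : ContinuousOn T Ω := hT.continuousOn
  have hDTcont : ContinuousOn (fderiv ℝ T) Ω := hT.continuousOn_fderiv_of_isOpen hΩ le_rfl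
  have hwc : Continuous w := hw1.continuous
  have hDwc : Continuous (fderiv ℝ w) := hw1.continuous_fderiv one_ne_zero
  -- the vector field H = w • T and its derivative D
  set H : EuclideanSpace ℝ (Fin N) → EuclideanSpace ℝ (Fin N) := fun x => w x • T x with hH_def
  set D : EuclideanSpace ℝ (Fin N) → EuclideanSpace ℝ (Fin N) →L[ℝ] EuclideanSpace ℝ (Fin N) :=
    fun x => w x • fderiv ℝ T x + (fderiv ℝ w x).smulRight (T x) with hD_def
  have hH : ∀ x, HasFDerivAt H (D x) x := by
    intro x
    by_cases hx : x ∈ Ω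
    · have hTx : HasFDerivAt T (fderiv ℝ T x) x :=
        (((hT.differentiableOn one_ne_zero).differentiableAt (hΩ.mem_nhds hx))).hasFDerivAt
      have := ((hw1.differentiable one_ne_zero x).hasFDerivAt).smul hTx
      exact this
    · have hxK : x ∉ K := fun h => hx (hsupp' h)
      have hev : H =ᶠ[nhds x] fun _ => 0 := by
        filter_upwards [hKcl.isOpen_compl.mem_nhds hxK] with y hy
        simp [hH_def, hw0 y hy]
      have h0 : D x = 0 := by
        simp only [hD_def, hw0 x hxK, hDw0 x hxK, zero_smul, zero_add]
        ext v; simp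
      rw [h0]
      exact (hasFDerivAt_const (0 : EuclideanSpace ℝ (Fin N)) x).congr_of_eventuallyEq hev
  -- per-coordinate integration by parts
  have key : ∀ i : Fin N,
      Integrable (fun x => (inner ℝ (EuclideanSpace.single i (1:ℝ))
          (D x (EuclideanSpace.single i 1)) : ℝ)) volume ∧
      ∫ x, (inner ℝ (EuclideanSpace.single i (1:ℝ)) (D x (EuclideanSpace.single i 1)) : ℝ) = 0 := by
    intro i
    set e : EuclideanSpace ℝ (Fin N) := EuclideanSpace.single i (1:ℝ) with he_def
    set S : EuclideanSpace ℝ (Fin N) → ℝ := fun x => (inner ℝ e (D x e) : ℝ) with hS_def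
    have hSeq : ∀ x, S x = w x * (inner ℝ e (fderiv ℝ T x e) : ℝ)
        + fderiv ℝ w x e * (inner ℝ e (T x) : ℝ) := by
      intro x
      simp only [hS_def, hD_def, ContinuousLinearMap.add_apply, ContinuousLinearMap.smul_apply,
        ContinuousLinearMap.smulRight_apply, inner_add_right, real_inner_smul_right]
    have hScont : Continuous S := by
      have hfun : S = fun x => w x * (inner ℝ e (fderiv ℝ T x e) : ℝ)
          + fderiv ℝ w x e * (inner ℝ e (T x) : ℝ) := funext hSeq
      apply continuous_of_contOn_of_zero hΩ hKcl hsupp'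
      · rw [hfun]
        apply ContinuousOn.add
        · exact hwc.continuousOn.mul
            (ContinuousOn.inner continuousOn_const (hDTcont.clm_apply continuousOn_const))
        · exact ((hDwc.clm_apply continuous_const).continuousOn).mul
            (ContinuousOn.inner continuousOn_const hTcont)
      · intro x hx
        simp [hS_def, hD_def, hw0 x hx, hDw0 x hx]
    have hScpt : HasCompactSupport S :=
      HasCompactSupport.intro hKc (fun x hx => by simp [hS_def, hD_def, hw0 x hx, hDw0 x hx])
    have hSint : Integrable S := hScont.integrable_of_hasCompactSupport hScpt
    set B : EuclideanSpace ℝ (Fin N) →L[ℝ] ℝ →L[ℝ] ℝ :=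
      (ContinuousLinearMap.mul ℝ ℝ).comp (innerSL ℝ e) with hB_def
    have hgd : Differentiable ℝ (fun _ : EuclideanSpace ℝ (Fin N) => (1:ℝ)) :=
      differentiable_const 1
    have hfH : Differentiable ℝ H := fun x => (hH x).differentiableAt
    have hDH : ∀ x, fderiv ℝ H x = D x := fun x => (hH x).fderiv
    have hf'g : Integrable
        (fun x => B (fderiv ℝ H x e) ((fun _ : EuclideanSpace ℝ (Fin N) => (1:ℝ)) x)) volume := by
      apply hSint.congr
      filter_upwards with x
      rw [hDH x]
      simp [hS_def, hB_def]
    have hfg' : Integrable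
        (fun x => B (H x) (fderiv ℝ (fun _ : EuclideanSpace ℝ (Fin N) => (1:ℝ)) x e)) volume := by
      have h0 : (fun x => B (H x) (fderiv ℝ (fun _ : EuclideanSpace ℝ (Fin N) => (1:ℝ)) x e))
          = fun _ => (0:ℝ) := by
        funext x; simp
      rw [h0]
      exact integrable_zero _ _ _
    have hfg : Integrable (fun x => B (H x) 1) volume := by
      have hcont : Continuous (fun x => (inner ℝ e (H x) : ℝ)) := by
        apply continuous_of_contOn_of_zero hΩ hKcl hsupp'
        · exact ContinuousOn.inner continuousOn_const (hwc.continuousOn.smul hTcont)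
        · intro x hx
          simp [hH_def, hw0 x hx]
      have hicpt : HasCompactSupport (fun x => (inner ℝ e (H x) : ℝ)) :=
        HasCompactSupport.intro hKc (fun x hx => by simp [hH_def, hw0 x hx])
      apply (hcont.integrable_of_hasCompactSupport hicpt).congr
      filter_upwards with x
      simp [hB_def]
    have hibp := integral_bilinear_fderiv_right_eq_neg_left_of_integrable
      (μ := volume) (v := e) (B := B) hf'g hfg' hfg (fun x _ => hfH x) (fun x _ => hgd x)
    simp only [fderiv_const_apply, ContinuousLinearMap.zero_apply, map_zero] at hibp
    rw [integral_zero] at hibp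
    have hzero : ∫ x, B (fderiv ℝ H x e) (1:ℝ) = 0 := by linarith
    refine ⟨hSint, ?_⟩
    calc integral volume S = ∫ x, B (fderiv ℝ H x e) (1:ℝ) := by
          apply integral_congr_ae
          filter_upwards with x
          rw [hDH x]
          simp [hS_def, hB_def]
      _ = 0 := hzero
  -- integrability of the main integrands
  have hoffΩ : ∀ x ∉ Ω, x ∉ K := fun x hx h => hx (hsupp' h)
  have hvdivcont : ContinuousOn (vdiv T) Ω := by
    unfold vdiv
    exact continuousOn_finset_sum _ fun i _ =>
      ContinuousOn.inner (hDTcont.clm_apply continuousOn_const) continuousOn_const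
  have hA_cont : Continuous (fun x => w x * vdiv T x) :=
    continuous_of_contOn_of_zero hΩ hKcl hsupp' (hwc.continuousOn.mul hvdivcont)
      (fun x hx => by simp [hw0 x hx])
  have hA_int : Integrable (fun x => w x * vdiv T x) volume :=
    hA_cont.integrable_of_hasCompactSupport
      (HasCompactSupport.intro hKc fun x hx => by simp [hw0 x hx])
  have hB_cont : Continuous (fun x => fderiv ℝ w x (T x)) :=
    continuous_of_contOn_of_zero hΩ hKcl hsupp' (hDwc.continuousOn.clm_apply hTcont)
      (fun x hx => by simp [hDw0 x hx])
  have hB_int : Integrable (fun x => fderiv ℝ w x (T x)) volume :=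
    hB_cont.integrable_of_hasCompactSupport
      (HasCompactSupport.intro hKc fun x hx => by simp [hDw0 x hx])
  have hC_cont : Continuous (fun x => ‖T x‖ ^ q * w x) :=
    continuous_of_contOn_of_zero hΩ hKcl hsupp'
      ((hTcont.norm.rpow_const fun x _ => Or.inr hq0.le).mul hwc.continuousOn)
      (fun x hx => by simp [hw0 x hx])
  have hC_int : Integrable (fun x => ‖T x‖ ^ q * w x) volume :=
    hC_cont.integrable_of_hasCompactSupport
      (HasCompactSupport.intro hKc fun x hx => by simp [hw0 x hx])
  have hgradnorm : ∀ x, ‖gradient u x‖ = ‖fderiv ℝ u x‖ := fun x =>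
    LinearIsometryEquiv.norm_map _ _
  have hgradcont : Continuous (fun x => ‖gradient u x‖ ^ p) := by
    have h1 : Continuous (fun x => fderiv ℝ u x) := hu.continuous_fderiv (by simp)
    have h2 : Continuous (gradient u) :=
      (LinearIsometryEquiv.continuous _).comp h1
    exact h2.norm.rpow_const fun x => Or.inr hp0.le
  have hgrad0 : ∀ x ∉ K, ‖gradient u x‖ ^ p = 0 := by
    intro x hx
    rw [hgradnorm x, hDu0 x hx]
    simp [Real.zero_rpow hp0.ne']
  have hG_int : Integrable (fun x => ‖gradient u x‖ ^ p) volume :=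
    hgradcont.integrable_of_hasCompactSupport (HasCompactSupport.intro hKc hgrad0)
  -- pointwise identity for the divergence of H
  have pointwise : ∀ x, (∑ i, (inner ℝ (EuclideanSpace.single i (1:ℝ))
        (D x (EuclideanSpace.single i 1)) : ℝ))
      = w x * vdiv T x + fderiv ℝ w x (T x) := by
    intro x
    have hterm : ∀ i : Fin N, (inner ℝ (EuclideanSpace.single i (1:ℝ))
          (D x (EuclideanSpace.single i 1)) : ℝ)
        = w x * (inner ℝ (fderiv ℝ T x (EuclideanSpace.single i 1))
            (EuclideanSpace.single i (1:ℝ)) : ℝ)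
          + fderiv ℝ w x (EuclideanSpace.single i 1) * T x i := by
      intro i
      simp only [hD_def, ContinuousLinearMap.add_apply, ContinuousLinearMap.smul_apply,
        ContinuousLinearMap.smulRight_apply, inner_add_right, real_inner_smul_right]
      rw [real_inner_comm, EuclideanSpace.inner_single_left]
      simp
    rw [Finset.sum_congr rfl (fun i _ => hterm i), Finset.sum_add_distrib, ← Finset.mul_sum,
      sum_apply_single]
    rfl
  -- divergence theorem: ∫ div H = 0
  have hsum0 : ∫ x, (w x * vdiv T x + fderiv ℝ w x (T x)) = 0 := by
    calc ∫ x, (w x * vdiv T x + fderiv ℝ w x (T x))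
        = ∫ x, ∑ i, (inner ℝ (EuclideanSpace.single i (1:ℝ))
            (D x (EuclideanSpace.single i 1)) : ℝ) := by
          congr 1; funext x; rw [pointwise x]
      _ = ∑ i, ∫ x, (inner ℝ (EuclideanSpace.single i (1:ℝ))
            (D x (EuclideanSpace.single i 1)) : ℝ) :=
          integral_finset_sum _ fun i _ => (key i).1
      _ = 0 := by simp only [fun i => (key i).2, Finset.sum_const_zero]
  have hdiv : ∫ x, w x * vdiv T x = - ∫ x, fderiv ℝ w x (T x) := by
    rw [integral_add hA_int hB_int] at hsum0
    linarith
  -- pointwise Young inequality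
  have hpt : ∀ x, -(fderiv ℝ w x (T x))
      ≤ ‖gradient u x‖ ^ p + (p - 1) * (‖T x‖ ^ q * w x) := by
    intro x
    set a : ℝ := ‖fderiv ℝ u x‖ with ha_def
    set b : ℝ := |u x| ^ (p - 1) * ‖T x‖ with hb_def
    have ha0 : 0 ≤ a := norm_nonneg _
    have hb0 : 0 ≤ b := mul_nonneg (Real.rpow_nonneg (abs_nonneg _) _) (norm_nonneg _)
    have habs : |u x| ^ (p - 2) * |u x| = |u x| ^ (p - 1) := by
      rcases eq_or_ne (u x) 0 with h | h
      · rw [h]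
        simp [Real.zero_rpow (by linarith : p - 1 ≠ (0:ℝ))]
      · rw [show p - 1 = (p - 2) + 1 by ring, Real.rpow_add_one (abs_ne_zero.mpr h)]
    have h1 : -(fderiv ℝ w x (T x)) ≤ p * (a * b) := by
      calc -(fderiv ℝ w x (T x)) ≤ |fderiv ℝ w x (T x)| := neg_le_abs _
        _ = |p * |u x| ^ (p - 2) * u x| * |fderiv ℝ u x (T x)| := by
            rw [(hw' x).fderiv]
            simp [abs_mul]
        _ ≤ (p * |u x| ^ (p - 2) * |u x|) * (‖fderiv ℝ u x‖ * ‖T x‖) := by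
            apply mul_le_mul
            · rw [abs_mul, abs_mul, abs_of_nonneg hp0.le,
                abs_of_nonneg (Real.rpow_nonneg (abs_nonneg _) _)]
            · exact (fderiv ℝ u x).le_opNorm (T x)
            · exact abs_nonneg _
            · positivity
        _ = p * (a * b) := by rw [mul_assoc p, habs]; ring
    have h2 : a * b ≤ |a| ^ p / p + |b| ^ q / q := Real.young_inequality a b hpq
    rw [abs_of_nonneg ha0, abs_of_nonneg hb0] at h2
    have h3 : p * (a * b) ≤ a ^ p + (p / q) * b ^ q := by
      have := mul_le_mul_of_nonneg_left h2 hp0.le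
      calc p * (a * b) ≤ p * (a ^ p / p + b ^ q / q) := this
        _ = a ^ p + (p / q) * b ^ q := by field_simp
    have hpq' : p / q = p - 1 := by
      rw [hq_def]
      field_simp
    have hbq : b ^ q = ‖T x‖ ^ q * w x := by
      rw [hb_def, Real.mul_rpow (Real.rpow_nonneg (abs_nonneg _) _) (norm_nonneg _),
        ← Real.rpow_mul (abs_nonneg _), show (p - 1) * q = p by rw [hq_def]; field_simp]
      simp only [hw_def]
      ring
    have hap : a ^ p = ‖gradient u x‖ ^ p := by rw [hgradnorm x]
    rw [hpq', hbq, hap] at h3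
    linarith
  -- final assembly
  rw [ge_iff_le]
  have e1 : ∫ x in Ω, (vdiv T x - (p - 1) * ‖T x‖ ^ q) * w x
      = ∫ x, (vdiv T x - (p - 1) * ‖T x‖ ^ q) * w x := by
    apply setIntegral_eq_integral_of_forall_compl_eq_zero
    intro x hx
    simp [hw0 x (hoffΩ x hx)]
  have e2 : ∫ x in Ω, ‖gradient u x‖ ^ p = ∫ x, ‖gradient u x‖ ^ p :=
    setIntegral_eq_integral_of_forall_compl_eq_zero fun x hx => hgrad0 x (hoffΩ x hx)
  rw [e1, e2]
  have e3 : ∫ x, (vdiv T x - (p - 1) * ‖T x‖ ^ q) * w x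
      = (∫ x, w x * vdiv T x) - (p - 1) * ∫ x, ‖T x‖ ^ q * w x := by
    calc ∫ x, (vdiv T x - (p - 1) * ‖T x‖ ^ q) * w x
        = ∫ x, (w x * vdiv T x - (p - 1) * (‖T x‖ ^ q * w x)) := by
          congr 1; funext x; ring
      _ = (∫ x, w x * vdiv T x) - ∫ x, (p - 1) * (‖T x‖ ^ q * w x) :=
          integral_sub hA_int (hC_int.const_mul _)
      _ = (∫ x, w x * vdiv T x) - (p - 1) * ∫ x, ‖T x‖ ^ q * w x := by
          rw [integral_const_mul]
  have e4 : ∫ x, w x * vdiv T x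
      ≤ (∫ x, ‖gradient u x‖ ^ p) + (p - 1) * ∫ x, ‖T x‖ ^ q * w x := by
    rw [hdiv, ← integral_neg]
    calc ∫ x, -(fderiv ℝ w x (T x))
        ≤ ∫ x, (‖gradient u x‖ ^ p + (p - 1) * (‖T x‖ ^ q * w x)) :=
          integral_mono hB_int.neg (hG_int.add (hC_int.const_mul _)) hpt
      _ = (∫ x, ‖gradient u x‖ ^ p) + (p - 1) * ∫ x, ‖T x‖ ^ q * w x := by
          rw [integral_add hG_int (hC_int.const_mul _), integral_const_mul]
  linarith
end

section
/- Let d be a smooth positive function on an open set U ⊂ ℝ^N with |∇d| = 1, and let p ≠ k be real numbers with p > 1. Then Δ_p(d^{(p−k)/(p−1)}) = ((p−k)/(p−1)) |(p−k)/(p−1)|^{p−2} d^{−k} (d Δd + (1−k)|∇d|^2) on U. In particular, Δ_p(d^{(p−k)/(p−1)}) ≤ 0 is equivalent to (p−k)(dΔd + 1 − k) ≤ 0. -/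
open Real

noncomputable def pLaplacian {N : ℕ} (p : ℝ) (w : EuclideanSpace ℝ (Fin N) → ℝ)
    (x : EuclideanSpace ℝ (Fin N)) : ℝ :=
  vdiv (fun y => ‖gradient w y‖ ^ (p - 2) • gradient w y) x

noncomputable def laplacian {N : ℕ} (w : EuclideanSpace ℝ (Fin N) → ℝ)
    (x : EuclideanSpace ℝ (Fin N)) : ℝ :=
  vdiv (gradient w) x

theorem pLaplacian_of_distance_power {N : ℕ} (U : Set (EuclideanSpace ℝ (Fin N)))
    (hU : IsOpen U) (d : EuclideanSpace ℝ (Fin N) → ℝ) (hd : ContDiff ℝ (⊤ : ℕ∞) d)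
    (hdpos : ∀ x ∈ U, 0 < d x) (hgrad : ∀ x ∈ U, ‖gradient d x‖ = 1)
    (p k : ℝ) (hp : 1 < p) (hpk : p ≠ k) :
    (∀ x ∈ U, pLaplacian p (fun y => d y ^ ((p - k) / (p - 1))) x =
        ((p - k) / (p - 1)) * |(p - k) / (p - 1)| ^ (p - 2) * d x ^ (-k) *
          (d x * laplacian d x + (1 - k) * ‖gradient d x‖ ^ 2)) ∧
      (∀ x ∈ U, (pLaplacian p (fun y => d y ^ ((p - k) / (p - 1))) x ≤ 0 ↔
        (p - k) * (d x * laplacian d x + 1 - k) ≤ 0)) := by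
  have hp1 : (0:ℝ) < p - 1 := by linarith
  set α : ℝ := (p - k) / (p - 1) with hα
  have hαne : α ≠ 0 := div_ne_zero (sub_ne_zero_of_ne hpk) hp1.ne'
  have hdd : Differentiable ℝ d := hd.differentiable (by simp)
  have hfc : ContDiff ℝ (⊤ : ℕ∞) (fderiv ℝ d) := hd.fderiv_right (by simp)
  have hgc : ContDiff ℝ (⊤ : ℕ∞) (gradient d) := by
    have h : gradient d = fun y =>
        (InnerProductSpace.toDual ℝ (EuclideanSpace ℝ (Fin N))).symm (fderiv ℝ d y) := rfl
    rw [h]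
    exact (InnerProductSpace.toDual ℝ (EuclideanSpace ℝ (Fin N))).symm.contDiff.comp hfc
  have hfg : ∀ x v, (inner ℝ (gradient d x) v : ℝ) = fderiv ℝ d x v := by
    intro x v
    exact InnerProductSpace.toDual_symm_apply
  have hαp : α * (p - 1) = p - k := div_mul_cancel₀ _ hp1.ne'
  have key : ∀ x ∈ U, pLaplacian p (fun y => d y ^ α) x
      = α * |α| ^ (p - 2) * d x ^ (-k)
        * (d x * laplacian d x + (1 - k) * ‖gradient d x‖ ^ 2) := by
    intro x hx
    have hdx := hdpos x hx
    set c : ℝ := α * |α| ^ (p - 2) with hc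
    set w : EuclideanSpace ℝ (Fin N) → ℝ := fun y => d y ^ α with hw
    have hTF : (fun y => ‖gradient w y‖ ^ (p - 2) • gradient w y)
        =ᶠ[nhds x] (fun y => c • ((d y ^ ((1:ℝ) - k)) • gradient d y)) := by
      filter_upwards [hU.mem_nhds hx] with y hy
      have hdy := hdpos y hy
      have hgw : gradient w y = (α * d y ^ (α - 1)) • gradient d y := by
        have h1 : HasFDerivAt w ((α * d y ^ (α - 1)) • fderiv ℝ d y) y :=
          (hdd y).hasFDerivAt.rpow_const (Or.inl hdy.ne')
        simp only [gradient, h1.fderiv, map_smul]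
      rw [hgw, norm_smul, hgrad y hy, mul_one, smul_smul]
      have habs : ‖(α * d y ^ (α - 1) : ℝ)‖ = |α| * d y ^ (α - 1) := by
        rw [Real.norm_eq_abs, abs_mul, abs_of_pos (Real.rpow_pos_of_pos hdy _)]
      have hexp : (α - 1) * (p - 2) + (α - 1) = 1 - k := by linear_combination hαp
      have hdk : d y ^ ((α - 1) * (p - 2)) * d y ^ (α - 1) = d y ^ ((1:ℝ) - k) := by
        rw [← Real.rpow_add hdy, hexp]
      rw [habs, Real.mul_rpow (abs_nonneg _) (Real.rpow_pos_of_pos hdy _).le,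
        ← Real.rpow_mul hdy.le]
      rw [show |α| ^ (p - 2) * d y ^ ((α - 1) * (p - 2)) * (α * d y ^ (α - 1))
          = c * (d y ^ ((α - 1) * (p - 2)) * d y ^ (α - 1)) by rw [hc]; ring, hdk]
      rw [mul_smul]
    have hDg : HasFDerivAt (gradient d) (fderiv ℝ (gradient d) x) x :=
      (hgc.differentiable (by simp) x).hasFDerivAt
    have hs : HasFDerivAt (fun y => d y ^ ((1:ℝ) - k))
        (((1 - k) * d x ^ (1 - k - 1)) • fderiv ℝ d x) x :=
      (hdd x).hasFDerivAt.rpow_const (Or.inl hdx.ne')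
    have hF : HasFDerivAt (fun y => c • ((d y ^ ((1:ℝ) - k)) • gradient d y))
        (c • (d x ^ ((1:ℝ) - k) • fderiv ℝ (gradient d) x +
          (((1 - k) * d x ^ (1 - k - 1)) • fderiv ℝ d x).smulRight (gradient d x))) x :=
      (hs.smul hDg).const_smul c
    have hL : ∑ i, (inner ℝ (fderiv ℝ (gradient d) x (EuclideanSpace.single i 1))
        (EuclideanSpace.single i (1:ℝ)) : ℝ) = laplacian d x := rfl
    have hG : ∑ i, (inner ℝ (gradient d x) (EuclideanSpace.single i (1:ℝ)) : ℝ)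
        * (inner ℝ (gradient d x) (EuclideanSpace.single i (1:ℝ)) : ℝ)
        = ‖gradient d x‖ ^ 2 := by
      rw [← real_inner_self_eq_norm_sq, PiLp.inner_apply]
      refine Finset.sum_congr rfl fun i _ => ?_
      rw [EuclideanSpace.inner_single_right]
      simp [RCLike.inner_apply, sq]
    simp only [pLaplacian, vdiv]
    rw [hTF.fderiv_eq, hF.fderiv]
    simp only [ContinuousLinearMap.coe_smul', Pi.smul_apply, ContinuousLinearMap.add_apply,
      ContinuousLinearMap.coe_smul, ContinuousLinearMap.smulRight_apply, smul_eq_mul,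
      inner_add_left, real_inner_smul_left]
    have hstep : ∀ i : Fin N,
        c * (d x ^ ((1:ℝ) - k) * (inner ℝ (fderiv ℝ (gradient d) x (EuclideanSpace.single i 1))
            (EuclideanSpace.single i (1:ℝ)) : ℝ)
          + (1 - k) * d x ^ (1 - k - 1) * fderiv ℝ d x (EuclideanSpace.single i 1)
            * (inner ℝ (gradient d x) (EuclideanSpace.single i (1:ℝ)) : ℝ))
        = (c * d x ^ ((1:ℝ) - k)) * (inner ℝ (fderiv ℝ (gradient d) x (EuclideanSpace.single i 1))
            (EuclideanSpace.single i (1:ℝ)) : ℝ)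
          + (c * ((1 - k) * d x ^ (1 - k - 1)))
            * ((inner ℝ (gradient d x) (EuclideanSpace.single i (1:ℝ)) : ℝ)
              * (inner ℝ (gradient d x) (EuclideanSpace.single i (1:ℝ)) : ℝ)) := by
      intro i
      rw [← hfg]
      ring
    simp only [hstep]
    rw [Finset.sum_add_distrib, ← Finset.mul_sum, ← Finset.mul_sum, hL, hG]
    have h1 : d x ^ ((1:ℝ) - k) = d x * d x ^ (-k) := by
      rw [show (1:ℝ) - k = 1 + -k by ring, Real.rpow_add hdx, Real.rpow_one]
    have h2 : (1:ℝ) - k - 1 = -k := by ring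
    rw [h1, h2]
    ring
  constructor
  · intro x hx
    exact key x hx
  · intro x hx
    rw [key x hx, hgrad x hx]
    have hpos : 0 < |α| ^ (p - 2) * d x ^ (-k) / (p - 1) :=
      div_pos (mul_pos (Real.rpow_pos_of_pos (abs_pos.mpr hαne) _)
        (Real.rpow_pos_of_pos (hdpos x hx) _)) hp1
    have heq : α * |α| ^ (p - 2) * d x ^ (-k) * (d x * laplacian d x + (1 - k) * 1 ^ 2)
        = (|α| ^ (p - 2) * d x ^ (-k) / (p - 1))
          * ((p - k) * (d x * laplacian d x + 1 - k)) := by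
      rw [hα]
      field_simp
      ring
    rw [heq]
    constructor
    · intro h
      nlinarith [hpos]
    · intro h
      exact mul_nonpos_of_nonneg_of_nonpos hpos.le h
end

section
/- Let β_0, β_1, ..., β_m be real numbers and 0 < δ < 1 ≤ D. Then the integral ∫_0^δ r^{−1+β_0} X_1(r/D)^{1+β_1} ⋯ X_m(r/D)^{1+β_m} dr is finite if and only if either β_0 > 0, or there exists 1 ≤ j ≤ m with β_0 = β_1 = ⋯ = β_{j−1} = 0 and β_j > 0. -/
open Real MeasureTheory Finset

noncomputable def X : ℕ → ℝ → ℝ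
  | 0 => id
  | (n + 1) => fun t => (1 - Real.log (X n t))⁻¹

/-!
Put `t = r / D`. Since `t (log X_k)'(t) = X_1(t) ⋯ X_k(t)`, the function `X_j(r/D)^γ` has
derivative `γ X_j^γ X_1 ⋯ X_j / r` and `log X_m(r/D)` has derivative `X_1 ⋯ X_m / r`.
Let `j` be the first index with `β_j ≠ 0`. Up to the constant `D^β₀` the integrand is
`X_j^β_j X_1 ⋯ X_j / r` times the product of the later factors `X_l^(1+β_l)`, `l > j`; as
`1 / X_l ≤ 1 / X_(j+1) = 1 - log X_j ≤ C_ε X_j^(-ε)`, that product lies between `c X_j^ε` and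
`C X_j^(-ε)`. Taking `ε = |β_j| / 2` squeezes the integrand against the derivative of
`c X_j(r/D)^(β_j/2)`, with `c` of the sign of `β_j`: this function has a finite limit at `0` if
`β_j > 0` and tends to `-∞` if `β_j < 0`. If all `β_l` vanish, the integrand is the derivative
of `log X_m(r/D) → -∞`. Finally, a nonnegative function below the derivative of a function with a
finite limit at `0` is integrable there, and one above the derivative of a function tending to
`-∞` is not.
-/

open Filter Topology

lemma integrableOn_Ioc_of_le_deriv {f g g' : ℝ → ℝ} {a b L : ℝ}
    (hf : AEStronglyMeasurable f (volume.restrict (Set.Ioc a b)))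
    (hderiv : ∀ x ∈ Set.Ioc a b, HasDerivAt g (g' x) x)
    (hfg : ∀ x ∈ Set.Ioc a b, 0 ≤ f x ∧ f x ≤ g' x)
    (hg : Tendsto g (𝓝[>] a) (𝓝 L)) : IntegrableOn f (Set.Ioc a b) := by
  classical
  have hupdate : ∀ x ≠ a, Function.update g a L =ᶠ[𝓝 x] g := fun x hx =>
    (eventually_ne_nhds hx).mono fun y hy => Function.update_of_ne hy _ _
  have hcont : ContinuousOn (Function.update g a L) (Set.Icc a b) := by
    intro x hx
    rcases hx.1.eq_or_lt with rfl | hax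
    · exact continuousWithinAt_update_same.2 <| hg.mono_left <| nhdsWithin_mono _
        fun y hy => lt_of_le_of_ne hy.1.1 (Ne.symm hy.2)
    · exact ((hderiv x ⟨hax, hx.2⟩).continuousAt.congr
        (hupdate x hax.ne').symm).continuousWithinAt
  have hint : IntegrableOn g' (Set.Ioc a b) :=
    intervalIntegral.integrableOn_deriv_of_nonneg hcont
      (fun x hx => (hderiv x (Set.Ioo_subset_Ioc_self hx)).congr_of_eventuallyEq
        (hupdate x hx.1.ne'))
      fun x hx => (hfg x (Set.Ioo_subset_Ioc_self hx)).1.trans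
        (hfg x (Set.Ioo_subset_Ioc_self hx)).2
  refine hint.mono' hf (ae_restrict_of_forall_mem measurableSet_Ioc fun x hx => ?_)
  rw [norm_of_nonneg (hfg x hx).1]
  exact (hfg x hx).2

lemma not_integrableOn_Ioc_of_deriv_le {f g g' : ℝ → ℝ} {a b : ℝ} (hab : a < b)
    (hderiv : ∀ x ∈ Set.Ioc a b, HasDerivAt g (g' x) x)
    (hfg : ∀ x ∈ Set.Ioc a b, 0 ≤ f x ∧ g' x ≤ f x)
    (hg : Tendsto g (𝓝[>] a) atBot) : ¬IntegrableOn f (Set.Ioc a b) := by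
  intro hf
  set M := ∫ x in Set.Ioc a b, f x
  have hbound : ∀ c ∈ Set.Ioo a b, g b - M ≤ g c := by
    intro c hc
    have hsub : Set.Icc c b ⊆ Set.Ioc a b := Set.Icc_subset_Ioc_iff hc.2.le |>.2 ⟨hc.1, le_rfl⟩
    have hFTC : g b - g c ≤ ∫ x in c..b, f x :=
      intervalIntegral.sub_le_integral_of_hasDeriv_right_of_le hc.2.le
        (fun x hx => (hderiv x (hsub hx)).continuousAt.continuousWithinAt)
        (fun x hx => (hderiv x (hsub (Set.Ioo_subset_Icc_self hx))).hasDerivWithinAt)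
        (hf.mono_set hsub) fun x hx => (hfg x (hsub (Set.Ioo_subset_Icc_self hx))).2
    have hM : ∫ x in c..b, f x ≤ M := by
      rw [intervalIntegral.integral_of_le hc.2.le]
      exact setIntegral_mono_set hf
        (ae_restrict_of_forall_mem measurableSet_Ioc fun x hx => (hfg x hx).1)
        (Eventually.of_forall (Set.Ioc_subset_Ioc_left hc.1.le))
    linarith
  obtain ⟨c, hc, hgc⟩ := (Filter.Eventually.and (Ioo_mem_nhdsGT hab)
    (hg.eventually (eventually_lt_atBot (g b - M)))).exists
  exact (hbound c hc).not_gt hgc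

lemma one_sub_log_le {s ε : ℝ} (hs : 0 < s) (hs1 : s ≤ 1) (hε : 0 < ε) :
    1 - log s ≤ (1 + 1 / ε) * s ^ (-ε) := by
  have h1 : 1 ≤ s ^ (-ε) := one_le_rpow_of_pos_of_le_one_of_nonpos hs hs1 (by linarith)
  have h2 := log_le_rpow_div (inv_nonneg.2 hs.le) hε
  rw [log_inv, inv_rpow hs.le, ← rpow_neg hs.le] at h2
  calc 1 - log s ≤ s ^ (-ε) + s ^ (-ε) / ε := by linarith
    _ = _ := by ring

lemma rpow_mem_Icc_of_le {u v a : ℝ} (hv : 0 < v) (hvu : v ≤ u) (hu : u ≤ 1) :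
    u ^ a ∈ Set.Icc (v ^ |a|) (v ^ (-|a|)) := by
  have hu0 : 0 < u := hv.trans_le hvu
  rcases le_or_gt 0 a with ha | ha
  · rw [abs_of_nonneg ha]
    exact ⟨rpow_le_rpow hv.le hvu ha, (rpow_le_one hu0.le hu ha).trans
      (one_le_rpow_of_pos_of_le_one_of_nonpos hv (hvu.trans hu) (by linarith))⟩
  · rw [abs_of_neg ha, neg_neg]
    exact ⟨(rpow_le_one hv.le (hvu.trans hu) (by linarith)).trans
      (one_le_rpow_of_pos_of_le_one_of_nonpos hu0 hu ha.le), rpow_le_rpow_of_nonpos hv hvu ha.le⟩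

lemma hasDerivAt_comp_div_const {g : ℝ → ℝ} {c D r : ℝ} (hD : D ≠ 0) (hr : r ≠ 0)
    (hg : HasDerivAt g (c / (r / D)) (r / D)) : HasDerivAt (fun r => g (r / D)) (c / r) r :=
  (hg.comp r ((hasDerivAt_id r).div_const D)).congr_deriv (by field_simp)

lemma div_mem_Ioo_zero_one {r D : ℝ} (hr : r ∈ Set.Ioo 0 D) : r / D ∈ Set.Ioo 0 1 :=
  ⟨div_pos hr.1 (hr.1.trans hr.2), (div_lt_one (hr.1.trans hr.2)).2 hr.2⟩

lemma Nat.forall_le_or_exists_le_first_not (p : ℕ → Prop) (m : ℕ) :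
    (∀ l ≤ m, p l) ∨ ∃ j ≤ m, (∀ l < j, p l) ∧ ¬p j := by
  classical
  by_cases h : ∃ j ≤ m, ¬p j
  · refine Or.inr ⟨Nat.find h, (Nat.find_spec h).1, fun l hl => ?_, (Nat.find_spec h).2⟩
    by_contra hl'
    exact Nat.find_min h hl ⟨hl.le.trans (Nat.find_spec h).1, hl'⟩
  · push Not at h
    exact Or.inl h

noncomputable def prodX (k : ℕ) (t : ℝ) : ℝ := ∏ l ∈ Icc 1 k, X l t

noncomputable def tailX (β : ℕ → ℝ) (j m : ℕ) (t : ℝ) : ℝ := ∏ l ∈ Ioc j m, X l t ^ (1 + β l)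

lemma X_mem_Ioo (k : ℕ) {t : ℝ} (ht : t ∈ Set.Ioo 0 1) : X k t ∈ Set.Ioo 0 1 := by
  induction k with
  | zero => exact ht
  | succ k ih =>
    have := log_neg ih.1 ih.2
    exact ⟨inv_pos.2 (by linarith), inv_lt_one_of_one_lt₀ (by linarith)⟩

lemma X_le_X_succ (k : ℕ) {t : ℝ} (ht : t ∈ Set.Ioo 0 1) : X k t ≤ X (k + 1) t := by
  obtain ⟨h0, h1⟩ := X_mem_Ioo k ht
  have := log_le_sub_one_of_pos (inv_pos.2 h0)
  rw [log_inv] at this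
  exact (le_inv_comm₀ h0 (by linarith [log_neg h0 h1])).2 (by linarith)

lemma X_monotone {t : ℝ} (ht : t ∈ Set.Ioo 0 1) : Monotone fun k => X k t :=
  monotone_nat_of_le_succ fun k => X_le_X_succ k ht

lemma prodX_succ (k : ℕ) (t : ℝ) : prodX (k + 1) t = prodX k t * X (k + 1) t :=
  prod_Icc_succ_top (by omega) _

lemma prodX_pos (k : ℕ) {t : ℝ} (ht : t ∈ Set.Ioo 0 1) : 0 < prodX k t :=
  prod_pos fun l _ => (X_mem_Ioo l ht).1

lemma measurable_X (k : ℕ) : Measurable (X k) := by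
  induction k with
  | zero => exact measurable_id
  | succ k ih => exact (measurable_const.sub ih.log).inv

lemma exists_inv_X_succ_rpow_le (k : ℕ) {A ε : ℝ} (hA : 0 ≤ A) (hε : 0 < ε) :
    ∃ C > 0, ∀ t ∈ Set.Ioo 0 1, (X (k + 1) t)⁻¹ ^ A ≤ C * X k t ^ (-ε) := by
  set ε' := ε / (A + 1)
  have hε' : 0 < ε' := by positivity
  have hε'A : ε' * A ≤ ε := by
    rw [div_mul_eq_mul_div, div_le_iff₀ (by linarith)]; nlinarith
  refine ⟨(1 + 1 / ε') ^ A, by positivity, fun t ht => ?_⟩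
  obtain ⟨h0, h1⟩ := X_mem_Ioo k ht
  have hinv : (X (k + 1) t)⁻¹ ≤ (1 + 1 / ε') * X k t ^ (-ε') := by
    rw [show (X (k + 1) t)⁻¹ = 1 - log (X k t) from inv_inv _]
    exact one_sub_log_le h0 h1.le hε'
  calc (X (k + 1) t)⁻¹ ^ A ≤ ((1 + 1 / ε') * X k t ^ (-ε')) ^ A :=
        rpow_le_rpow (inv_nonneg.2 (X_mem_Ioo (k + 1) ht).1.le) hinv hA
    _ = (1 + 1 / ε') ^ A * X k t ^ (-(ε' * A)) := by
        rw [mul_rpow (by positivity) (by positivity), ← rpow_mul h0.le, neg_mul]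
    _ ≤ (1 + 1 / ε') ^ A * X k t ^ (-ε) :=
        mul_le_mul_of_nonneg_left
          (rpow_le_rpow_of_exponent_ge h0 h1.le (by linarith)) (by positivity)

lemma tailX_mem_Icc (β : ℕ → ℝ) (j m : ℕ) {t : ℝ} (ht : t ∈ Set.Ioo 0 1) :
    tailX β j m t ∈ Set.Icc (X (j + 1) t ^ (∑ l ∈ Ioc j m, |1 + β l|))
      (X (j + 1) t ^ (-∑ l ∈ Ioc j m, |1 + β l|)) := by
  have hv := (X_mem_Ioo (j + 1) ht).1
  have hbound : ∀ l ∈ Ioc j m, X l t ^ (1 + β l) ∈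
      Set.Icc (X (j + 1) t ^ |1 + β l|) (X (j + 1) t ^ (-|1 + β l|)) := fun l hl =>
    rpow_mem_Icc_of_le hv (X_monotone ht (mem_Ioc.1 hl).1) (X_mem_Ioo l ht).2.le
  rw [rpow_sum_of_pos hv, ← sum_neg_distrib, rpow_sum_of_pos hv]
  exact ⟨prod_le_prod (fun _ _ => by positivity) fun l hl => (hbound l hl).1,
    prod_le_prod (fun l _ => (rpow_pos_of_pos (X_mem_Ioo l ht).1 _).le)
      fun l hl => (hbound l hl).2⟩

lemma exists_tailX_bounds (β : ℕ → ℝ) (j m : ℕ) {ε : ℝ} (hε : 0 < ε) :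
    ∃ C > 0, ∀ t ∈ Set.Ioo 0 1,
      C⁻¹ ≤ X j t ^ (-ε) * tailX β j m t ∧ X j t ^ ε * tailX β j m t ≤ C := by
  obtain ⟨C, hC, hCb⟩ := exists_inv_X_succ_rpow_le j
    (sum_nonneg fun l _ => abs_nonneg (1 + β l)) hε
  refine ⟨C, hC, fun t ht => ?_⟩
  set A := ∑ l ∈ Ioc j m, |1 + β l|
  have hXj := (X_mem_Ioo j ht).1
  have hu : 0 < X (j + 1) t ^ A := rpow_pos_of_pos (X_mem_Ioo (j + 1) ht).1 _
  obtain ⟨hlow, hup⟩ := tailX_mem_Icc β j m ht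
  rw [rpow_neg (X_mem_Ioo (j + 1) ht).1.le] at hup
  have key : X j t ^ ε * (X (j + 1) t ^ A)⁻¹ ≤ C := by
    calc X j t ^ ε * (X (j + 1) t ^ A)⁻¹ ≤ X j t ^ ε * (C * X j t ^ (-ε)) := by
          rw [← inv_rpow (X_mem_Ioo (j + 1) ht).1.le]
          exact mul_le_mul_of_nonneg_left (hCb t ht) (rpow_pos_of_pos hXj _).le
      _ = C := by rw [rpow_neg hXj.le]; field_simp
  refine ⟨?_, (mul_le_mul_of_nonneg_left hup (rpow_pos_of_pos hXj _).le).trans key⟩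
  calc C⁻¹ ≤ (X j t ^ ε * (X (j + 1) t ^ A)⁻¹)⁻¹ :=
        inv_anti₀ (mul_pos (rpow_pos_of_pos hXj _) (inv_pos.2 hu)) key
    _ = X j t ^ (-ε) * X (j + 1) t ^ A := by rw [mul_inv, inv_inv, rpow_neg hXj.le]
    _ ≤ X j t ^ (-ε) * tailX β j m t :=
        mul_le_mul_of_nonneg_left hlow (rpow_pos_of_pos hXj _).le

lemma rpow_mul_prod_eq (β : ℕ → ℝ) {j m : ℕ} (hjm : j ≤ m) (hβ : ∀ l < j, β l = 0) {t : ℝ}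
    (ht : t ∈ Set.Ioo 0 1) :
    t ^ β 0 * ∏ l ∈ Icc 1 m, X l t ^ (1 + β l) = X j t ^ β j * prodX j t * tailX β j m t := by
  induction j with
  | zero =>
    simp only [X, id, prodX, tailX, Icc_eq_empty_of_lt one_pos, prod_empty, mul_one]
    rw [← Icc_add_one_left_eq_Ioc, zero_add]
  | succ j ih =>
    have hX := (X_mem_Ioo (j + 1) ht).1
    rw [ih (by omega) fun l hl => hβ l (by omega), hβ j (by omega), rpow_zero, one_mul, tailX,
      ← Icc_add_one_left_eq_Ioc, ← Ioc_insert_left (by omega), prod_insert (by simp), prodX_succ,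
      rpow_add hX, rpow_one, tailX]
    ring

lemma hasDerivAt_X (k : ℕ) {t : ℝ} (ht : t ∈ Set.Ioo 0 1) :
    HasDerivAt (X k) (X k t * prodX k t / t) t := by
  induction k with
  | zero =>
    simpa [X, prodX, ht.1.ne'] using hasDerivAt_id t
  | succ k ih =>
    obtain ⟨h0, h1⟩ := X_mem_Ioo k ht
    have hne : 1 - log (X k t) ≠ 0 := by linarith [log_neg h0 h1]
    refine (((ih.log h0.ne').const_sub 1).inv hne).congr_deriv ?_
    rw [prodX_succ, show X (k + 1) t = (1 - log (X k t))⁻¹ from rfl]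
    field_simp

lemma hasDerivAt_rpow_X_div (k : ℕ) (γ : ℝ) {D r : ℝ} (hr : r ∈ Set.Ioo 0 D) :
    HasDerivAt (fun r => X k (r / D) ^ γ) (γ * X k (r / D) ^ γ * prodX k (r / D) / r) r := by
  have ht := div_mem_Ioo_zero_one hr
  have h0 := (X_mem_Ioo k ht).1
  refine hasDerivAt_comp_div_const (g := fun t => X k t ^ γ) (hr.1.trans hr.2).ne' hr.1.ne' ?_
  refine ((hasDerivAt_X k ht).rpow_const (p := γ) (Or.inl h0.ne')).congr_deriv ?_
  rw [rpow_sub_one h0.ne']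
  field_simp

lemma hasDerivAt_log_X_div (k : ℕ) {D r : ℝ} (hr : r ∈ Set.Ioo 0 D) :
    HasDerivAt (fun r => log (X k (r / D))) (prodX k (r / D) / r) r := by
  have ht := div_mem_Ioo_zero_one hr
  have h0 := (X_mem_Ioo k ht).1
  refine hasDerivAt_comp_div_const (g := fun t => log (X k t)) (hr.1.trans hr.2).ne'
    hr.1.ne' ?_
  refine ((hasDerivAt_X k ht).log h0.ne').congr_deriv ?_
  field_simp

lemma tendsto_X_nhdsGT_zero (k : ℕ) : Tendsto (X k) (𝓝[>] 0) (𝓝[>] 0) := by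
  induction k with
  | zero => exact tendsto_id
  | succ k ih =>
    refine tendsto_nhdsWithin_iff.2 ⟨?_, ?_⟩
    · exact ((tendsto_atTop_add_const_left _ 1 tendsto_neg_atBot_atTop).comp
        (tendsto_log_nhdsGT_zero.comp ih)).inv_tendsto_atTop
    · filter_upwards [ih (Ioo_mem_nhdsGT one_pos)] with t ht
      exact (X_mem_Ioo 1 ht).1

lemma tendsto_X_div_nhdsGT_zero (k : ℕ) {D : ℝ} (hD : 0 < D) :
    Tendsto (fun r => X k (r / D)) (𝓝[>] 0) (𝓝[>] 0) := by
  refine (tendsto_X_nhdsGT_zero k).comp (tendsto_nhdsWithin_iff.2 ⟨?_, ?_⟩)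
  · simpa using (tendsto_id.div_const D).mono_left (nhdsWithin_le_nhds (a := (0 : ℝ)))
  · exact eventually_nhdsWithin_of_forall fun r hr => div_pos hr hD

noncomputable def integrand (β : ℕ → ℝ) (m : ℕ) (D r : ℝ) : ℝ :=
  r ^ (-1 + β 0) * ∏ j ∈ Icc 1 m, X j (r / D) ^ (1 + β j)

section integrand

variable (β : ℕ → ℝ) (m : ℕ) {D : ℝ}

lemma measurable_integrand : Measurable (integrand β m D) :=
  (measurable_id.pow_const _).mul <| Finset.measurable_prod _ fun j _ =>
    ((measurable_X j).comp (measurable_id.div_const D)).pow_const _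

lemma integrand_pos {r : ℝ} (hr : r ∈ Set.Ioo 0 D) : 0 < integrand β m D r :=
  mul_pos (rpow_pos_of_pos hr.1 _)
    (prod_pos fun l _ => rpow_pos_of_pos (X_mem_Ioo l (div_mem_Ioo_zero_one hr)).1 _)

lemma rpow_mul_X_rpow_mul_prodX_div_pos (j : ℕ) (a γ : ℝ) {r : ℝ} (hr : r ∈ Set.Ioo 0 D) :
    0 < D ^ a * X j (r / D) ^ γ * prodX j (r / D) / r :=
  have ht := div_mem_Ioo_zero_one hr
  div_pos (mul_pos (mul_pos (rpow_pos_of_pos (hr.1.trans hr.2) _)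
    (rpow_pos_of_pos (X_mem_Ioo j ht).1 _)) (prodX_pos j ht)) hr.1

lemma integrand_eq_mul {j : ℕ} (hjm : j ≤ m) (hβ : ∀ l < j, β l = 0) (γ : ℝ) {r : ℝ}
    (hr : r ∈ Set.Ioo 0 D) :
    integrand β m D r = D ^ β 0 * X j (r / D) ^ γ * prodX j (r / D) / r *
      (X j (r / D) ^ (β j - γ) * tailX β j m (r / D)) := by
  have hD : 0 < D := hr.1.trans hr.2
  have ht := div_mem_Ioo_zero_one hr
  have hsplit : X j (r / D) ^ β j = X j (r / D) ^ γ * X j (r / D) ^ (β j - γ) := by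
    rw [← rpow_add (X_mem_Ioo j ht).1, add_sub_cancel]
  calc integrand β m D r
        = D ^ β 0 * ((r / D) ^ β 0 * ∏ l ∈ Icc 1 m, X l (r / D) ^ (1 + β l)) / r := by
        rw [integrand, add_comm, rpow_add hr.1, rpow_neg_one, div_rpow hr.1.le hD.le]
        field_simp
    _ = _ := by rw [rpow_mul_prod_eq β hjm hβ ht, hsplit]; ring

lemma integrableOn_integrand_of_pos {δ : ℝ} (hδ : 0 < δ) (hδD : δ < D) {j : ℕ} (hjm : j ≤ m)
    (hβ : ∀ l < j, β l = 0) (hj : 0 < β j) : IntegrableOn (integrand β m D) (Set.Ioc 0 δ) := by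
  set γ := β j / 2
  have hγ : 0 < γ := half_pos hj
  obtain ⟨C, hC, hT⟩ := exists_tailX_bounds β j m hγ
  have hmem : Set.Ioc 0 δ ⊆ Set.Ioo 0 D := Set.Ioc_subset_Ioo_right hδD
  refine integrableOn_Ioc_of_le_deriv (measurable_integrand β m).aestronglyMeasurable
    (g := fun r => D ^ β 0 * C / γ * X j (r / D) ^ γ) (L := D ^ β 0 * C / γ * 0 ^ γ)
    (fun r hr => (hasDerivAt_rpow_X_div j γ (hmem hr)).const_mul _)
    (fun r hr => ⟨(integrand_pos β m (hmem hr)).le, ?_⟩) ?_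
  · have ht := div_mem_Ioo_zero_one (hmem hr)
    have hw := rpow_mul_X_rpow_mul_prodX_div_pos j (β 0) γ (hmem hr)
    calc integrand β m D r
        = D ^ β 0 * X j (r / D) ^ γ * prodX j (r / D) / r *
          (X j (r / D) ^ γ * tailX β j m (r / D)) := by
          rw [integrand_eq_mul β m hjm hβ γ (hmem hr), sub_half]
      _ ≤ D ^ β 0 * X j (r / D) ^ γ * prodX j (r / D) / r * C :=
          mul_le_mul_of_nonneg_left (hT _ ht).2 hw.le
      _ = D ^ β 0 * C / γ * (γ * X j (r / D) ^ γ * prodX j (r / D) / r) := by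
          field_simp
  · exact ((continuousAt_rpow_const 0 γ (Or.inr hγ.le)).tendsto.comp
      ((tendsto_X_div_nhdsGT_zero j (hδ.trans hδD)).mono_right nhdsWithin_le_nhds)).const_mul _

lemma not_integrableOn_integrand_of_neg {δ : ℝ} (hδ : 0 < δ) (hδD : δ < D) {j : ℕ}
    (hjm : j ≤ m) (hβ : ∀ l < j, β l = 0) (hj : β j < 0) :
    ¬IntegrableOn (integrand β m D) (Set.Ioc 0 δ) := by
  set γ := β j / 2
  have hγ : γ < 0 := div_neg_of_neg_of_pos hj two_pos
  obtain ⟨C, hC, hT⟩ := exists_tailX_bounds β j m (neg_pos.2 hγ)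
  have hmem : Set.Ioc 0 δ ⊆ Set.Ioo 0 D := Set.Ioc_subset_Ioo_right hδD
  refine not_integrableOn_Ioc_of_deriv_le hδ
    (g := fun r => D ^ β 0 * C⁻¹ / γ * X j (r / D) ^ γ)
    (fun r hr => (hasDerivAt_rpow_X_div j γ (hmem hr)).const_mul _)
    (fun r hr => ⟨(integrand_pos β m (hmem hr)).le, ?_⟩) ?_
  · have ht := div_mem_Ioo_zero_one (hmem hr)
    have hw := rpow_mul_X_rpow_mul_prodX_div_pos j (β 0) γ (hmem hr)
    calc D ^ β 0 * C⁻¹ / γ * (γ * X j (r / D) ^ γ * prodX j (r / D) / r)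
        = D ^ β 0 * X j (r / D) ^ γ * prodX j (r / D) / r * C⁻¹ := by
          field_simp [hγ.ne]
      _ ≤ D ^ β 0 * X j (r / D) ^ γ * prodX j (r / D) / r *
          (X j (r / D) ^ (- -γ) * tailX β j m (r / D)) :=
          mul_le_mul_of_nonneg_left (hT _ ht).1 hw.le
      _ = integrand β m D r := by
          rw [integrand_eq_mul β m hjm hβ γ (hmem hr), sub_half, neg_neg]
  · exact ((tendsto_rpow_neg_nhdsGT_zero hγ).comp
      (tendsto_X_div_nhdsGT_zero j (hδ.trans hδD))).const_mul_atTop_of_neg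
      (div_neg_of_pos_of_neg (mul_pos (rpow_pos_of_pos (hδ.trans hδD) _) (inv_pos.2 hC)) hγ)

lemma not_integrableOn_integrand_of_forall_eq_zero {δ : ℝ} (hδ : 0 < δ) (hδD : δ < D)
    (hβ : ∀ l ≤ m, β l = 0) : ¬IntegrableOn (integrand β m D) (Set.Ioc 0 δ) := by
  have hmem : Set.Ioc 0 δ ⊆ Set.Ioo 0 D := Set.Ioc_subset_Ioo_right hδD
  refine not_integrableOn_Ioc_of_deriv_le hδ (fun r hr => hasDerivAt_log_X_div m (hmem hr))
    (fun r hr => ⟨(integrand_pos β m (hmem hr)).le, ?_⟩)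
    (tendsto_log_nhdsGT_zero.comp (tendsto_X_div_nhdsGT_zero m (hδ.trans hδD)))
  rw [integrand_eq_mul β m le_rfl (fun l hl => hβ l hl.le) 0 (hmem hr), hβ 0 (Nat.zero_le m),
    hβ m le_rfl, tailX, Ioc_self, prod_empty]
  simp

end integrand

theorem integral_finiteness_criterion_general (m : ℕ) (β : ℕ → ℝ)
    (δ D : ℝ) (hδ : 0 < δ) (hδ1 : δ < 1) (hD : 1 ≤ D) :
    MeasureTheory.IntegrableOn
        (fun r => r ^ (-1 + β 0) * ∏ j ∈ Finset.Icc 1 m, X j (r / D) ^ (1 + β j))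
        (Set.Ioo 0 δ) ↔
      (0 < β 0 ∨ ∃ j, 1 ≤ j ∧ j ≤ m ∧ (∀ l < j, β l = 0) ∧ 0 < β j) := by
  have hδD : δ < D := hδ1.trans_le hD
  change IntegrableOn (integrand β m D) _ ↔ _
  rw [← integrableOn_Ioc_iff_integrableOn_Ioo]
  constructor
  · intro hint
    rcases Nat.forall_le_or_exists_le_first_not (β · = 0) m with hzero | ⟨j, hjm, hβ, hj⟩
    · exact absurd hint (not_integrableOn_integrand_of_forall_eq_zero β m hδ hδD hzero)
    rcases lt_or_gt_of_ne hj with hneg | hpos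
    · exact absurd hint (not_integrableOn_integrand_of_neg β m hδ hδD hjm hβ hneg)
    rcases j with _ | j
    · exact Or.inl hpos
    · exact Or.inr ⟨j + 1, by omega, hjm, hβ, hpos⟩
  · rintro (hpos | ⟨j, -, hjm, hβ, hpos⟩)
    · exact integrableOn_integrand_of_pos β m hδ hδD (Nat.zero_le m) (by simp) hpos
    · exact integrableOn_integrand_of_pos β m hδ hδD hjm hβ hpos

theorem integral_finiteness_criterion (m : ℕ) (hm : 1 ≤ m) (β : ℕ → ℝ)
    (δ D : ℝ) (hδ : 0 < δ) (hδ1 : δ < 1) (hD : 1 ≤ D) :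
    MeasureTheory.IntegrableOn
        (fun r => r ^ (-1 + β 0) * ∏ j ∈ Finset.Icc 1 m, X j (r / D) ^ (1 + β j))
        (Set.Ioo 0 δ) ↔
      (0 < β 0 ∨ ∃ j, 1 ≤ j ∧ j ≤ m ∧ (∀ l < j, β l = 0) ∧ 0 < β j) :=
  integral_finiteness_criterion_general m β δ D hδ hδ1 hD
end
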